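/- Let q be a prime power and m a positive integer. If ψ: F_{q^m}^n → F_{q^m}^n is an F_{q^m}-linear map satisfying rk(ψ(v)) = rk(v) for every v ∈ F_{q^m}^n, then there exist α ∈ F_{q^m}^* and B ∈ GL_n(F_q) such that ψ(v) = α·(v B) for all v ∈ F_{q^m}^n. -/

import Mathlib

open Matrix

/-- The rank weight of `v : Fqm^n`: the dimension over `Fq` of the `Fq`-span of its entries. -/
noncomputable def rkw (Fq : Type*) [Field Fq] {Fqm : Type*} [Field Fqm] [Algebra Fq Fqm]
    {n : ℕ} (v : Fin n → Fqm) : ℕ :=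
  Module.finrank Fq (Submodule.span Fq (Set.range v))

/-!
Rank weight zero means zero, so `ψ` is injective, and the vectors of rank weight at most one are
exactly the multiples `α • b` of `Fq`-rational vectors `b`; hence `ψ` maps each rational vector to
such a multiple. If `ψ eᵢ = α • bᵢ` and `ψ eⱼ = β • bⱼ` with `α, β` linearly independent over `Fq`,
write `ψ (eᵢ + eⱼ) = γ • d`: comparing the `α`- and `β`-components coordinatewise makes `bᵢ` and
`bⱼ` multiples of `d`, so `ψ eᵢ` and `ψ eⱼ` are proportional, against injectivity. Thus all `ψ eⱼ`
can be written with one scalar `α`, which gives `ψ v = α • v B` with the `bⱼ` as rows of `B`, and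
`B` is invertible because `ψ` is injective.
-/

theorem LinearIndependent.exists_eq_smul_of_smul_add_smul_eq {K L I : Type*} [Field K] [CommRing L]
    [Algebra K L] {α β γ : L} (hαβ : LinearIndependent K ![α, β]) {b c d : I → K}
    (h : α • (algebraMap K L ∘ b) + β • (algebraMap K L ∘ c) = γ • (algebraMap K L ∘ d)) :
    ∃ s t : K, b = s • d ∧ c = t • d := by
  have hk (k : I) : b k • α + c k • β = d k • γ := by
    simpa [Algebra.smul_def, mul_comm] using congrFun h k
  by_cases hd : d = 0
  · refine ⟨0, 0, funext fun k => ?_, funext fun k => ?_⟩ <;>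
      simp [(LinearIndependent.pair_iff.1 hαβ (b k) (c k) (by simpa [hd] using hk k))]
  -- eliminate `γ` between coordinate `k` and a coordinate `k₀` where `d` does not vanish
  obtain ⟨k₀, hk₀⟩ : ∃ k, d k ≠ 0 := by simpa [funext_iff] using hd
  have hcoef (k : I) : d k₀ * b k = d k * b k₀ ∧ d k₀ * c k = d k * c k₀ := by
    simpa [sub_eq_zero] using LinearIndependent.pair_iff.1 hαβ (d k₀ * b k - d k * b k₀)
      (d k₀ * c k - d k * c k₀) (by linear_combination (norm := module) d k₀ • hk k - d k • hk k₀)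
  refine ⟨b k₀ / d k₀, c k₀ / d k₀, funext fun k => ?_, funext fun k => ?_⟩ <;>
    simp only [Pi.smul_apply, smul_eq_mul] <;> field_simp
  · linear_combination (hcoef k).1
  · linear_combination (hcoef k).2

theorem not_linearIndependent_pair_smul_smul {K V : Type*} [CommRing K] [Nontrivial K]
    [AddCommGroup V] [Module K V] (a b : K) (z : V) : ¬LinearIndependent K ![a • z, b • z] := by
  intro h
  obtain ⟨hb, ha⟩ :=
    LinearIndependent.pair_iff.1 h b (-a) (by rw [smul_smul, smul_smul, mul_comm]; simp)
  exact h.ne_zero 0 (by simp [neg_eq_zero.1 ha])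

section RankWeight

variable {Fq Fqm : Type*} [Field Fq] [Field Fqm] [Algebra Fq Fqm] {n : ℕ}

theorem rkw_eq_zero_iff {v : Fin n → Fqm} : rkw Fq v = 0 ↔ v = 0 := by
  have := Module.Finite.span_of_finite Fq (Set.finite_range v)
  simp [rkw, Submodule.finrank_eq_zero, Submodule.span_eq_bot, funext_iff]

theorem rkw_le_one_iff {v : Fin n → Fqm} :
    rkw Fq v ≤ 1 ↔ ∃ (α : Fqm) (b : Fin n → Fq), v = α • (algebraMap Fq Fqm ∘ b) := by
  have := Module.Finite.span_of_finite Fq (Set.finite_range v)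
  rw [rkw]
  constructor
  · intro hv
    obtain ⟨α, hα⟩ := (Submodule.finrank_le_one_iff_isPrincipal _).1 hv
    have hmem (k : Fin n) : ∃ c : Fq, c • α = v k :=
      Submodule.mem_span_singleton.1 (hα ▸ Submodule.subset_span ⟨k, rfl⟩)
    choose b hb using hmem
    exact ⟨α, b, funext fun k => by simp [← hb k, Algebra.smul_def, mul_comm]⟩
  · rintro ⟨α, b, rfl⟩
    have hle : Submodule.span Fq (Set.range (α • (algebraMap Fq Fqm ∘ b))) ≤ Fq ∙ α := by
      rw [Submodule.span_le]
      rintro _ ⟨k, rfl⟩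
      exact Submodule.mem_span_singleton.2 ⟨b k, by simp [Algebra.smul_def, mul_comm]⟩
    exact (Submodule.finrank_mono hle).trans ((finrank_span_le_card {α}).trans (by simp))

theorem rkw_algebraMap_comp_le_one (b : Fin n → Fq) : rkw Fq (algebraMap Fq Fqm ∘ b) ≤ 1 :=
  rkw_le_one_iff.2 ⟨1, b, (one_smul _ _).symm⟩

theorem injective_of_forall_rkw_map_eq {ψ : (Fin n → Fqm) →ₗ[Fqm] (Fin n → Fqm)}
    (hψ : ∀ v, rkw Fq (ψ v) = rkw Fq v) : Function.Injective ψ :=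
  (injective_iff_map_eq_zero ψ).2 fun v hv =>
    rkw_eq_zero_iff.1 ((hψ v).symm.trans (rkw_eq_zero_iff.2 hv))

theorem exists_eq_smul_algebraMap_comp_of_rkw_add_le_one {α : Fqm} {b : Fin n → Fq}
    {y : Fin n → Fqm} (hy : rkw Fq y ≤ 1) (hxy : rkw Fq (α • (algebraMap Fq Fqm ∘ b) + y) ≤ 1)
    (hli : LinearIndependent Fqm ![α • (algebraMap Fq Fqm ∘ b), y]) :
    ∃ c : Fin n → Fq, y = α • (algebraMap Fq Fqm ∘ c) := by
  obtain ⟨β, c, rfl⟩ := rkw_le_one_iff.1 hy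
  by_cases hβ : ∃ a : Fq, a • α = β
  · obtain ⟨a, rfl⟩ := hβ
    exact ⟨a • c, by ext k; simp [Algebra.smul_def]; ring⟩
  have hα : α ≠ 0 := by rintro rfl; exact hli.ne_zero 0 (by simp)
  have hαβ : LinearIndependent Fq ![α, β] :=
    (LinearIndependent.pair_iff' hα).2 (by simpa using hβ)
  obtain ⟨γ, d, hd⟩ := rkw_le_one_iff.1 hxy
  obtain ⟨s, t, rfl, rfl⟩ := hαβ.exists_eq_smul_of_smul_add_smul_eq hd
  refine absurd hli ?_
  convert not_linearIndependent_pair_smul_smul (α * algebraMap Fq Fqm s) (β * algebraMap Fq Fqm t)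
    (algebraMap Fq Fqm ∘ d) using 3 <;> ext k <;> simp [Algebra.smul_def] <;> ring

theorem exists_forall_map_single_eq_smul {ψ : (Fin n → Fqm) →ₗ[Fqm] (Fin n → Fqm)}
    (hψ : Function.Injective ψ) (hrat : ∀ u : Fin n → Fq, rkw Fq (ψ (algebraMap Fq Fqm ∘ u)) ≤ 1)
    (i₀ : Fin n) : ∃ α : Fqm, α ≠ 0 ∧ ∃ r : Fin n → Fin n → Fq,
      ∀ j, ψ (Pi.single j 1) = α • (algebraMap Fq Fqm ∘ r j) := by
  have hsingle (j : Fin n) : algebraMap Fq Fqm ∘ Pi.single j 1 = Pi.single j 1 := by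
    ext k; simp [Pi.single_apply]
  obtain ⟨α, b₀, hb₀⟩ := rkw_le_one_iff.1 (hsingle i₀ ▸ hrat (Pi.single i₀ 1))
  have hα : α ≠ 0 := by
    rintro rfl
    simpa using hψ (hb₀.trans ((zero_smul _ _).trans ψ.map_zero.symm))
  have hcol (j : Fin n) : ∃ r : Fin n → Fq, ψ (Pi.single j 1) = α • (algebraMap Fq Fqm ∘ r) := by
    by_cases hj : j = i₀
    · exact hj ▸ ⟨b₀, hb₀⟩
    refine exists_eq_smul_algebraMap_comp_of_rkw_add_le_one (b := b₀)
      (hsingle j ▸ hrat (Pi.single j 1)) ?_ ?_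
    · rw [← hb₀, ← map_add]
      convert hrat (Pi.single i₀ 1 + Pi.single j 1) using 3
      ext k; simp [Pi.single_apply]
    · rw [← hb₀, LinearIndependent.pair_iff]
      intro s t hst
      have h := @hψ (s • Pi.single i₀ 1 + t • Pi.single j 1) 0 (by simpa using hst)
      exact ⟨by simpa [hj] using congrFun h i₀, by simpa [Ne.symm hj] using congrFun h j⟩
  choose r hr using hcol
  exact ⟨α, hα, r, hr⟩

end RankWeight

theorem Matrix.isUnit_of_isUnit_map {K L I : Type*} [Fintype I] [DecidableEq I] [Field K]
    [CommRing L] [Nontrivial L] (f : K →+* L) {B : Matrix I I K} (h : IsUnit (B.map f)) :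
    IsUnit B := by
  rw [isUnit_iff_isUnit_det, ← RingHom.mapMatrix_apply, ← RingHom.map_det, isUnit_map_iff] at h
  exact (isUnit_iff_isUnit_det B).2 h

theorem stmt2 {Fq Fqm : Type*} [Field Fq] [Field Fqm] [Algebra Fq Fqm]
    {n : ℕ} (hn : 0 < n)
    (ψ : (Fin n → Fqm) →ₗ[Fqm] (Fin n → Fqm))
    (hψ : ∀ v : Fin n → Fqm, rkw Fq (ψ v) = rkw Fq v) :
    ∃ (α : Fqmˣ) (B : Matrix (Fin n) (Fin n) Fq), IsUnit B ∧
      ∀ v : Fin n → Fqm,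
        ψ v = (α : Fqm) • Matrix.vecMul v (B.map (algebraMap Fq Fqm)) := by
  have hinj := injective_of_forall_rkw_map_eq hψ
  obtain ⟨α, hα, r, hr⟩ := exists_forall_map_single_eq_smul hinj
    (fun u => (hψ _).trans_le (rkw_algebraMap_comp_le_one u)) ⟨0, hn⟩
  have hψB : ψ = α • vecMulLinear ((Matrix.of r).map (algebraMap Fq Fqm)) :=
    (Pi.basisFun Fqm (Fin n)).ext fun j => by ext k; simp [hr]
  have hB : Function.Injective ((Matrix.of r).map (algebraMap Fq Fqm)).vecMul :=
    fun v w h => hinj (by simp [hψB, h])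
  exact ⟨Units.mk0 α hα, Matrix.of r, isUnit_of_isUnit_map _ (vecMul_injective_iff_isUnit.1 hB),
    fun v => by simp [hψB]⟩
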